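/- Along any trajectory of the closed-loop interconnection of n identical nonlinear NI plants H₁ (storage V₁) with the networked linear OSNI controller 𝓛ₙ ⊗ M(s) (controller realization (A,B,C), storage V₂, output strictness δ > 0), with U₂ = Y₁ and U₁ = Y₂, the function Ŵ := V̂₁ + V̂₂ − Y₁ᵀY₂, where V̂₁ = Σᵢ V₁(xᵢ) and V̂₂ = (1/2) Σᵢ Σⱼ a_{ij} V₂(xᶜᵢ − xᶜⱼ), satisfies d/dt Ŵ ≤ −(δ/2) Σᵢ Σⱼ a_{ij} |ẏᶜᵢ − ẏᶜⱼ|² ≤ 0, where yᶜᵢ = Cxᶜᵢ are the individual controller outputs. -/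

import Mathlib

noncomputable section

open scoped RealInnerProductSpace
open Filter

abbrev Vec (n : ℕ) : Type := EuclideanSpace ℝ (Fin n)

def IsTrajectory {p m : ℕ} (f : Vec p → Vec m → Vec p)
    (x : ℝ → Vec p) (u : ℝ → Vec m) : Prop :=
  ∀ t : ℝ, HasDerivAt x (f (x t) (u t)) t

def PosDefFn {E : Type*} [Zero E] (V : E → ℝ) : Prop :=
  V 0 = 0 ∧ ∀ x, x ≠ 0 → 0 < V x

def NIStorage {p m : ℕ} (f : Vec p → Vec m → Vec p) (h : Vec p → Vec m)
    (V : Vec p → ℝ) : Prop :=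
  ∀ (x : ℝ → Vec p) (u : ℝ → Vec m), IsTrajectory f x u →
    ∀ t : ℝ, deriv (fun s => V (x s)) t ≤ ⟪u t, deriv (fun s => h (x s)) t⟫

def OSNIStorage {p m : ℕ} (f : Vec p → Vec m → Vec p) (h : Vec p → Vec m)
    (V : Vec p → ℝ) (δ : ℝ) : Prop :=
  ∀ (x : ℝ → Vec p) (u : ℝ → Vec m), IsTrajectory f x u →
    ∀ t : ℝ, deriv (fun s => V (x s)) t ≤
      ⟪u t, deriv (fun s => h (x s)) t⟫ - δ * ‖deriv (fun s => h (x s)) t‖ ^ 2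

def linF {q m : ℕ} (A : Matrix (Fin q) (Fin q) ℝ) (B : Matrix (Fin q) (Fin m) ℝ) :
    Vec q → Vec m → Vec q :=
  fun x u => Matrix.toEuclideanLin A x + Matrix.toEuclideanLin B u

def linH {q m : ℕ} (C : Matrix (Fin m) (Fin q) ℝ) : Vec q → Vec m :=
  fun x => Matrix.toEuclideanLin C x

/-- A real square matrix is Hurwitz if every eigenvalue of it (viewed as a complex
matrix) has negative real part. -/
def IsHurwitz {q : ℕ} (A : Matrix (Fin q) (Fin q) ℝ) : Prop :=
  ∀ μ ∈ spectrum ℂ (A.map (algebraMap ℝ ℂ)), μ.re < 0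

/-- Controllability of the pair (A, B). -/
def Controllable {q m : ℕ} (A : Matrix (Fin q) (Fin q) ℝ)
    (B : Matrix (Fin q) (Fin m) ℝ) : Prop :=
  Submodule.span ℝ {v : Fin q → ℝ | ∃ (k : ℕ) (w : Fin m → ℝ),
    v = (A ^ k * B).mulVec w} = ⊤

/-- Observability of the pair (A, C). -/
def Observable {q m : ℕ} (A : Matrix (Fin q) (Fin q) ℝ)
    (C : Matrix (Fin m) (Fin q) ℝ) : Prop :=
  ∀ v : Fin q → ℝ, (∀ k : ℕ, (C * A ^ k).mulVec v = 0) → v = 0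

/-- The undirected graph with adjacency matrix a is connected: every pair of nodes is
joined by a path of edges. -/
def AdjConnected {n : ℕ} (a : Fin n → Fin n → ℝ) : Prop :=
  ∀ i j : Fin n, Relation.ReflTransGen (fun k l => a k l = 1) i j

/-- The i-th block of the output of the networked controller 𝓛ₙ ⊗ M(s):
(Y₂)ᵢ = Σⱼ a_{ij}(yᶜᵢ − yᶜⱼ) where yᶜᵢ = C xᶜᵢ. -/
def netOut {q m n : ℕ} (C : Matrix (Fin m) (Fin q) ℝ) (a : Fin n → Fin n → ℝ)
    (xc : Fin n → ℝ → Vec q) (i : Fin n) (t : ℝ) : Vec m :=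
  ∑ j, a i j • (linH C (xc i t) - linH C (xc j t))

/-- The closed-loop interconnection of the n identical plants (f, h) with the networked
controller 𝓛ₙ ⊗ M(s): the controller inputs are the plant outputs, u₂ᵢ = yᵢ, and the
plant inputs are the blocks of the networked controller output, u₁ᵢ = (Y₂)ᵢ. -/
def NetClosedLoop {p q m n : ℕ} (f : Vec p → Vec m → Vec p) (h : Vec p → Vec m)
    (A : Matrix (Fin q) (Fin q) ℝ) (B : Matrix (Fin q) (Fin m) ℝ)
    (C : Matrix (Fin m) (Fin q) ℝ) (a : Fin n → Fin n → ℝ)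
    (xp : Fin n → ℝ → Vec p) (xc : Fin n → ℝ → Vec q) : Prop :=
  (∀ i, IsTrajectory f (xp i) (fun t => netOut C a xc i t)) ∧
  (∀ i, IsTrajectory (linF A B) (xc i) (fun t => h (xp i t)))

/-- Assumption IV for the open-loop interconnection of the parallel plant network 𝓗₁
followed by the controller network 𝓛ₙ ⊗ M(s): with constant plant input U₁ ≡ Ū₁, plant
outputs fed to the controller network, and constant controller-network output Y₂ ≡ Ȳ₂,
one has Ū₁ᵀȲ₂ ≤ γ |Ū₁|². -/
def AssumptionIV {p q m n : ℕ} (f : Vec p → Vec m → Vec p) (h : Vec p → Vec m)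
    (A : Matrix (Fin q) (Fin q) ℝ) (B : Matrix (Fin q) (Fin m) ℝ)
    (C : Matrix (Fin m) (Fin q) ℝ) (a : Fin n → Fin n → ℝ) (γ : ℝ) : Prop :=
  ∀ (xp : Fin n → ℝ → Vec p) (u₁ : Fin n → ℝ → Vec m) (xc : Fin n → ℝ → Vec q)
    (U₁bar Y₂bar : Fin n → Vec m) (ta tb : ℝ), ta < tb →
    (∀ i, IsTrajectory f (xp i) (u₁ i)) →
    (∀ i, IsTrajectory (linF A B) (xc i) (fun t => h (xp i t))) →
    (∀ i, ∀ t ∈ Set.Icc ta tb, u₁ i t = U₁bar i) →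
    (∀ i, ∀ t ∈ Set.Icc ta tb, netOut C a xc i t = Y₂bar i) →
    ∑ i, ⟪U₁bar i, Y₂bar i⟫ ≤ γ * ∑ i, ‖U₁bar i‖ ^ 2

/-! Summing the NI inequalities of the plants and the OSNI inequalities of the controller
differences `xᶜᵢ − xᶜⱼ` (which are again controller trajectories, driven by `yᵢ − yⱼ`, by
linearity) bounds `d/dt (V̂₁ + V̂₂)` by `Σᵢ ⟨ẏᵢ, (Y₂)ᵢ⟩ + ½ Σᵢⱼ aᵢⱼ ⟨yᵢ − yⱼ, ẏᶜᵢ − ẏᶜⱼ⟩` minus the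
strictness term. For a symmetric `a` the Laplacian quadratic form gives
`½ Σᵢⱼ aᵢⱼ ⟨yᵢ − yⱼ, ẏᶜᵢ − ẏᶜⱼ⟩ = Σᵢ ⟨yᵢ, (Ẏ₂)ᵢ⟩`, so both terms cancel against the product rule
derivative of the cross term `Y₁ᵀY₂`. -/

theorem sum_sum_mul_inner_sub_sub {ι E : Type*} [Fintype ι] [NormedAddCommGroup E]
    [InnerProductSpace ℝ E] {a : ι → ι → ℝ} (ha : ∀ i j, a i j = a j i) (u v : ι → E) :
    ∑ i, ∑ j, a i j * ⟪u i - u j, v i - v j⟫ = 2 * ∑ i, ⟪u i, ∑ j, a i j • (v i - v j)⟫ := by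
  have hswap : ∑ i, ∑ j, a i j * ⟪u j, v i - v j⟫ = -∑ i, ∑ j, a i j * ⟪u i, v i - v j⟫ := by
    rw [Finset.sum_comm, ← Finset.sum_neg_distrib]
    refine Finset.sum_congr rfl fun i _ => ?_
    rw [← Finset.sum_neg_distrib]
    refine Finset.sum_congr rfl fun j _ => ?_
    rw [ha, ← neg_sub (v i), inner_neg_right]
    ring
  simp only [inner_sub_left, mul_sub, Finset.sum_sub_distrib, hswap, inner_sum,
    real_inner_smul_right]
  ring

theorem HasDerivAt.linH {q m : ℕ} (C : Matrix (Fin m) (Fin q) ℝ) {x : ℝ → Vec q} {x' : Vec q}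
    {t : ℝ} (hx : HasDerivAt x x' t) : HasDerivAt (fun s => linH C (x s)) (linH C x') t :=
  (Matrix.toEuclideanLin C).toContinuousLinearMap.hasFDerivAt.comp_hasDerivAt t hx

section LinearController

variable {q m : ℕ} {A : Matrix (Fin q) (Fin q) ℝ} {B : Matrix (Fin q) (Fin m) ℝ}
  {x₁ x₂ : ℝ → Vec q} {u₁ u₂ : ℝ → Vec m}

theorem IsTrajectory.linF_sub (h₁ : IsTrajectory (linF A B) x₁ u₁)
    (h₂ : IsTrajectory (linF A B) x₂ u₂) :
    IsTrajectory (linF A B) (fun s => x₁ s - x₂ s) (fun s => u₁ s - u₂ s) := fun t => by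
  refine ((h₁ t).fun_sub (h₂ t)).congr_deriv ?_
  simp only [linF, map_sub]
  abel

theorem OSNIStorage.deriv_comp_sub_le {C : Matrix (Fin m) (Fin q) ℝ} {V : Vec q → ℝ} {δ : ℝ}
    (hV : OSNIStorage (linF A B) (linH C) V δ) (h₁ : IsTrajectory (linF A B) x₁ u₁)
    (h₂ : IsTrajectory (linF A B) x₂ u₂) (t : ℝ) :
    deriv (fun s => V (x₁ s - x₂ s)) t ≤
      ⟪u₁ t - u₂ t, deriv (fun s => linH C (x₁ s)) t - deriv (fun s => linH C (x₂ s)) t⟫ -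
        δ * ‖deriv (fun s => linH C (x₁ s)) t - deriv (fun s => linH C (x₂ s)) t‖ ^ 2 := by
  have hy : deriv (fun s => linH C (x₁ s - x₂ s)) t =
      deriv (fun s => linH C (x₁ s)) t - deriv (fun s => linH C (x₂ s)) t := by
    rw [(((h₁ t).fun_sub (h₂ t)).linH C).deriv, ((h₁ t).linH C).deriv, ((h₂ t).linH C).deriv]
    exact map_sub (Matrix.toEuclideanLin C) _ _
  simpa only [hy] using hV _ _ (h₁.linF_sub h₂) t

end LinearController

section ClosedLoop

variable {p q m n : ℕ} {f : Vec p → Vec m → Vec p} {h : Vec p → Vec m}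
  {A : Matrix (Fin q) (Fin q) ℝ} {B : Matrix (Fin q) (Fin m) ℝ} {C : Matrix (Fin m) (Fin q) ℝ}
  {a : Fin n → Fin n → ℝ} {xp : Fin n → ℝ → Vec p} {xc : Fin n → ℝ → Vec q}

/-- The paper's `Ŵ = V̂₁ + V̂₂ − Y₁ᵀY₂`. -/
def netStorage (h : Vec p → Vec m) (V₁ : Vec p → ℝ) (V₂ : Vec q → ℝ)
    (C : Matrix (Fin m) (Fin q) ℝ) (a : Fin n → Fin n → ℝ)
    (xp : Fin n → ℝ → Vec p) (xc : Fin n → ℝ → Vec q) (s : ℝ) : ℝ :=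
  (∑ i, V₁ (xp i s)) + (1 / 2) * ∑ i, ∑ j, a i j * V₂ (xc i s - xc j s) -
    ∑ i, ⟪h (xp i s), netOut C a xc i s⟫

theorem NetClosedLoop.hasDerivAt_netOut (hcl : NetClosedLoop f h A B C a xp xc)
    (i : Fin n) (t : ℝ) :
    HasDerivAt (fun s => netOut C a xc i s)
      (∑ j, a i j • (deriv (fun s => linH C (xc i s)) t - deriv (fun s => linH C (xc j s)) t))
      t := by
  have hyc : ∀ j, HasDerivAt (fun s => linH C (xc j s)) (deriv (fun s => linH C (xc j s)) t) t :=
    fun j => ((hcl.2 j t).linH C).differentiableAt.hasDerivAt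
  exact HasDerivAt.fun_sum fun j _ => ((hyc i).sub (hyc j)).const_smul (a i j)

theorem NetClosedLoop.deriv_netStorage_le (hcl : NetClosedLoop f h A B C a xp xc)
    {V₁ : Vec p → ℝ} {V₂ : Vec q → ℝ} {δ : ℝ} (hh : Differentiable ℝ h)
    (hV₁ : Differentiable ℝ V₁) (hV₂ : Differentiable ℝ V₂) (hNI : NIStorage f h V₁)
    (hOSNI : OSNIStorage (linF A B) (linH C) V₂ δ) (hsymm : ∀ i j, a i j = a j i)
    (ha : ∀ i j, 0 ≤ a i j) (t : ℝ) :
    deriv (netStorage h V₁ V₂ C a xp xc) t ≤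
      -(δ / 2) * ∑ i, ∑ j, a i j *
        ‖deriv (fun s => linH C (xc i s)) t - deriv (fun s => linH C (xc j s)) t‖ ^ 2 := by
  have ⟨hxp, hxc⟩ := hcl
  have hV₁' : ∀ i, HasDerivAt (fun s => V₁ (xp i s)) (deriv (fun s => V₁ (xp i s)) t) t :=
    fun i => ((hV₁ _).comp t (hxp i t).differentiableAt).hasDerivAt
  have hV₂' : ∀ i j, HasDerivAt (fun s => V₂ (xc i s - xc j s))
      (deriv (fun s => V₂ (xc i s - xc j s)) t) t :=
    fun i j => ((hV₂ _).comp t ((hxc i t).sub (hxc j t)).differentiableAt).hasDerivAt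
  have hy' : ∀ i, HasDerivAt (fun s => h (xp i s)) (deriv (fun s => h (xp i s)) t) t :=
    fun i => ((hh _).comp t (hxp i t).differentiableAt).hasDerivAt
  have hW : HasDerivAt (netStorage h V₁ V₂ C a xp xc) _ t :=
    ((HasDerivAt.fun_sum fun i _ => hV₁' i).add
      ((HasDerivAt.fun_sum fun i _ => HasDerivAt.fun_sum fun j _ =>
        (hV₂' i j).const_mul (a i j)).const_mul (1 / 2))).sub
      (HasDerivAt.fun_sum fun i _ => (hy' i).inner ℝ (hcl.hasDerivAt_netOut i t))
  rw [hW.deriv]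
  set yc' : Fin n → Vec m := fun i => deriv (fun s => linH C (xc i s)) t
  have hplant : ∑ i, deriv (fun s => V₁ (xp i s)) t ≤
      ∑ i, ⟪deriv (fun s => h (xp i s)) t, netOut C a xc i t⟫ :=
    Finset.sum_le_sum fun i _ => (hNI _ _ (hxp i) t).trans_eq (real_inner_comm _ _)
  have hctrl : ∑ i, ∑ j, a i j * deriv (fun s => V₂ (xc i s - xc j s)) t ≤
      ∑ i, ∑ j, a i j * ⟪h (xp i t) - h (xp j t), yc' i - yc' j⟫ -
        δ * ∑ i, ∑ j, a i j * ‖yc' i - yc' j‖ ^ 2 :=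
    calc _ ≤ ∑ i, ∑ j, a i j *
            (⟪h (xp i t) - h (xp j t), yc' i - yc' j⟫ - δ * ‖yc' i - yc' j‖ ^ 2) :=
          Finset.sum_le_sum fun i _ => Finset.sum_le_sum fun j _ =>
            mul_le_mul_of_nonneg_left (hOSNI.deriv_comp_sub_le (hxc i) (hxc j) t) (ha i j)
      _ = _ := by simp only [mul_sub, mul_left_comm _ δ, Finset.sum_sub_distrib, Finset.mul_sum]
  have hgraph := sum_sum_mul_inner_sub_sub hsymm (fun i => h (xp i t)) yc'
  rw [Finset.sum_add_distrib]
  linarith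

end ClosedLoop

theorem stmt8_general {p q m n : ℕ}
    (f : Vec p → Vec m → Vec p) (h : Vec p → Vec m)
    (hh : ContDiff ℝ 1 h)
    (V₁ : Vec p → ℝ) (hV₁c : ContDiff ℝ 1 V₁)
    (hNI : NIStorage f h V₁)
    (A : Matrix (Fin q) (Fin q) ℝ) (B : Matrix (Fin q) (Fin m) ℝ)
    (C : Matrix (Fin m) (Fin q) ℝ)
    (V₂ : Vec q → ℝ) (hV₂c : ContDiff ℝ 1 V₂)
    (δ : ℝ) (hδ : 0 < δ)
    (hOSNI : OSNIStorage (linF A B) (linH C) V₂ δ)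
    (a : Fin n → Fin n → ℝ)
    (hsymm : ∀ i j, a i j = a j i)
    (h01 : ∀ i j, a i j = 0 ∨ a i j = 1)
    (xp : Fin n → ℝ → Vec p) (xc : Fin n → ℝ → Vec q)
    (hcl : NetClosedLoop f h A B C a xp xc) :
    ∀ t : ℝ,
      deriv (fun s =>
          (∑ i, V₁ (xp i s)) +
          (1 / 2) * ∑ i, ∑ j, a i j * V₂ (xc i s - xc j s) -
          ∑ i, ⟪h (xp i s), netOut C a xc i s⟫) t ≤
        -(δ / 2) * ∑ i, ∑ j, a i j *
          ‖deriv (fun s => linH C (xc i s)) t - deriv (fun s => linH C (xc j s)) t‖ ^ 2 ∧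
      -(δ / 2) * ∑ i, ∑ j, a i j *
          ‖deriv (fun s => linH C (xc i s)) t - deriv (fun s => linH C (xc j s)) t‖ ^ 2
        ≤ 0 := by
  intro t
  have ha : ∀ i j, 0 ≤ a i j := fun i j => by rcases h01 i j with hij | hij <;> norm_num [hij]
  have hdiss : 0 ≤ ∑ i, ∑ j, a i j *
      ‖deriv (fun s => linH C (xc i s)) t - deriv (fun s => linH C (xc j s)) t‖ ^ 2 :=
    Finset.sum_nonneg fun i _ => Finset.sum_nonneg fun j _ => mul_nonneg (ha i j) (sq_nonneg _)
  exact ⟨hcl.deriv_netStorage_le (hh.differentiable one_ne_zero)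
      (hV₁c.differentiable one_ne_zero) (hV₂c.differentiable one_ne_zero) hNI hOSNI hsymm ha t,
    mul_nonpos_of_nonpos_of_nonneg (by linarith) hdiss⟩

/-- Along any trajectory of the closed-loop interconnection of n
identical nonlinear NI plants H₁ = (f, h) (storage V₁) with the networked linear OSNI
controller 𝓛ₙ ⊗ M(s) (realization (A,B,C), storage V₂, output strictness δ > 0), the
function Ŵ = V̂₁ + V̂₂ − Y₁ᵀY₂, with V̂₁ = Σᵢ V₁(xᵢ) and
V̂₂ = (1/2) Σᵢ Σⱼ a_{ij} V₂(xᶜᵢ − xᶜⱼ), satisfies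
d/dt Ŵ ≤ −(δ/2) Σᵢ Σⱼ a_{ij} |ẏᶜᵢ − ẏᶜⱼ|² ≤ 0. -/
theorem stmt8 {p q m n : ℕ}
    (f : Vec p → Vec m → Vec p) (h : Vec p → Vec m)
    (K : NNReal) (hf : LipschitzWith K (Function.uncurry f)) (hh : ContDiff ℝ 1 h)
    (V₁ : Vec p → ℝ) (hV₁pd : PosDefFn V₁) (hV₁c : ContDiff ℝ 1 V₁)
    (hNI : NIStorage f h V₁)
    (A : Matrix (Fin q) (Fin q) ℝ) (B : Matrix (Fin q) (Fin m) ℝ)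
    (C : Matrix (Fin m) (Fin q) ℝ)
    (V₂ : Vec q → ℝ) (hV₂pd : PosDefFn V₂) (hV₂c : ContDiff ℝ 1 V₂)
    (δ : ℝ) (hδ : 0 < δ)
    (hOSNI : OSNIStorage (linF A B) (linH C) V₂ δ)
    (a : Fin n → Fin n → ℝ)
    (hsymm : ∀ i j, a i j = a j i) (hdiag : ∀ i, a i i = 0)
    (h01 : ∀ i j, a i j = 0 ∨ a i j = 1)
    (xp : Fin n → ℝ → Vec p) (xc : Fin n → ℝ → Vec q)
    (hcl : NetClosedLoop f h A B C a xp xc) :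
    ∀ t : ℝ,
      deriv (fun s =>
          (∑ i, V₁ (xp i s)) +
          (1 / 2) * ∑ i, ∑ j, a i j * V₂ (xc i s - xc j s) -
          ∑ i, ⟪h (xp i s), netOut C a xc i s⟫) t ≤
        -(δ / 2) * ∑ i, ∑ j, a i j *
          ‖deriv (fun s => linH C (xc i s)) t - deriv (fun s => linH C (xc j s)) t‖ ^ 2 ∧
      -(δ / 2) * ∑ i, ∑ j, a i j *
          ‖deriv (fun s => linH C (xc i s)) t - deriv (fun s => linH C (xc j s)) t‖ ^ 2
        ≤ 0 :=
  stmt8_general f h hh V₁ hV₁c hNI A B C V₂ hV₂c δ hδ hOSNI a hsymm h01 xp xc hcl
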